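/- (Euler-Maclaurin in dimension one with rational endpoints) Let a₁ ≤ a₂ be rational numbers and let h be a polynomial. Then Σ_{x ∈ ℤ, a₁ ≤ x ≤ a₂} h(x) = ∫_{a₁}^{a₂} h(t) dt − Σ_{n≥0} (b(n+1, t₁)/(n+1)!) h^{(n)}(a₁) − Σ_{n≥0} (−1)^n (b(n+1, t₂)/(n+1)!) h^{(n)}(a₂), where t₁ = k₁ − a₁ with k₁ the smallest integer ≥ a₁, t₂ = a₂ − k₂ with k₂ the largest integer ≤ a₂ (so t₁, t₂ ∈ [0,1[), and b(n,t) are the Bernoulli polynomials defined by Σ_{n≥0} b(n,t)X^n/n! = e^{tX}X/(e^X−1). The sums over n are finite since h is a polynomial. -/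

import Mathlib

open MeasureTheory Filter Topology Set
open scoped RealInnerProductSpace Pointwise BigOperators

noncomputable section

/-- the ambient rational vector space: `ℝ^d` with the standard inner product, which is used
to identify `V` with its dual space `V^*`. -/
abbrev Vd (d : ℕ) := EuclideanSpace ℝ (Fin d)

variable {d : ℕ}

/-- the duality pairing `⟨ξ, x⟩` between `V^*` and `V`, realized by the standard inner
product of `ℝ^d`. -/
def pairE {d : ℕ} (ξ x : Vd d) : ℝ := @inner ℝ _ _ ξ x

/-- `Λ` is a lattice of its span: it is generated by finitely many `ℝ`-independent vectors. -/
def IsLatticeSub (Λ : AddSubgroup (Vd d)) : Prop :=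
  ∃ (k : ℕ) (v : Fin k → Vd d), LinearIndependent ℝ v ∧
    Λ = AddSubgroup.closure (Set.range v)

/-- `Λ` is a full-rank lattice in `ℝ^d`. -/
def IsFullLattice (Λ : AddSubgroup (Vd d)) : Prop :=
  IsLatticeSub Λ ∧ Submodule.span ℝ (Λ : Set (Vd d)) = ⊤

/-- `x` is a rational point with respect to the lattice `Λ`. -/
def IsRatPoint (Λ : AddSubgroup (Vd d)) (x : Vd d) : Prop :=
  ∃ q : ℤ, q ≠ 0 ∧ (q : ℝ) • x ∈ Λ

/-- viewing `φ ∈ V` as a linear functional via the standard pairing, it takes integer values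
on `Λ`, i.e. it belongs to the dual lattice. -/
def IsDualIntegral (Λ : AddSubgroup (Vd d)) (φ : Vd d) : Prop :=
  ∀ x ∈ Λ, ∃ n : ℤ, (pairE (φ) (x)) = (n : ℝ)

/-- a rational polyhedron (inside the span of `Λ`): a finite intersection of half-spaces
bounded by rational affine hyperplanes. -/
def IsRatPolyhedron (Λ : AddSubgroup (Vd d)) (P : Set (Vd d)) : Prop :=
  ∃ (n : ℕ) (φ : Fin n → Vd d) (c : Fin n → ℚ),
    (∀ i, IsDualIntegral Λ (φ i)) ∧
    P = {x | x ∈ Submodule.span ℝ (Λ : Set (Vd d)) ∧ ∀ i, (pairE (φ i) x) ≤ (c i : ℝ)}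

/-- the set `P` contains a straight (affine) line. -/
def ContainsLine (P : Set (Vd d)) : Prop :=
  ∃ x u : Vd d, u ≠ 0 ∧ ∀ t : ℝ, x + t • u ∈ P

/-- equality of meromorphic-type functions near `0`: they agree near `0` outside a closed
set with empty interior (the polar set). -/
def MeroEqAt0 (f g : Vd d → ℝ) : Prop :=
  ∃ Z : Set (Vd d), IsClosed Z ∧ interior Z = ∅ ∧
    ∀ᶠ ξ in 𝓝 (0 : Vd d), ξ ∉ Z → f ξ = g ξ

/-- `g` is analytic at `0` and its Taylor coefficients are rational with respect to an
integral basis (i.e. the coefficients take rational values on dual-lattice vectors). -/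
def HasRatSeriesAt0 (Λ : AddSubgroup (Vd d)) (g : Vd d → ℝ) : Prop :=
  ∃ p : FormalMultilinearSeries ℝ (Vd d) ℝ, HasFPowerSeriesAt g p 0 ∧
    ∀ (n : ℕ) (w : Fin n → Vd d), (∀ i, IsDualIntegral Λ (w i)) →
      ∃ q : ℚ, (p n) w = (q : ℝ)

/-- `f` is meromorphic near `0` with rational Taylor coefficients: near `0` it is a quotient
of two analytic functions with rational Taylor coefficients. -/
def RatMeromorphicAt0 (Λ : AddSubgroup (Vd d)) (f : Vd d → ℝ) : Prop :=
  ∃ g h : Vd d → ℝ, HasRatSeriesAt0 Λ g ∧ HasRatSeriesAt0 Λ h ∧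
    (¬ ∀ᶠ ξ in 𝓝 (0 : Vd d), h ξ = 0) ∧
    (∀ᶠ ξ in 𝓝 (0 : Vd d), h ξ ≠ 0 → f ξ * h ξ = g ξ)

/-- `m` is the canonical Lebesgue measure carried by the rational affine subspace `A`,
normalized so that a fundamental parallelepiped of the lattice `Λ ∩ lin(A)` has volume `1`:
it is the image of the standard Lebesgue measure under a `ℤ`-basis parametrization. -/
def IsCanonicalMeasure (Λ : AddSubgroup (Vd d)) (A : Set (Vd d)) (m : Measure (Vd d)) : Prop :=
  ∃ (k : ℕ) (x₀ : Vd d) (v : Fin k → Vd d),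
    x₀ ∈ A ∧ (∀ i, v i ∈ Λ) ∧ LinearIndependent ℝ v ∧
    A = {x | ∃ t : Fin k → ℝ, x = x₀ + ∑ i, t i • v i} ∧
    (∀ y ∈ Λ, y ∈ Submodule.span ℝ (Set.range v) →
      ∃ c : Fin k → ℤ, y = ∑ i, (c i : ℝ) • v i) ∧
    m = Measure.map (fun t : Fin k → ℝ => x₀ + ∑ i, t i • v i) volume

/-- the characterizing properties of the map `I`: it sends rational polyhedra to meromorphic
functions with rational coefficients, vanishes on polyhedra containing lines, and is given by
`∫_P e^{⟨ξ,x⟩} dm_{<P>}(x)` wherever this integral converges. -/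
def IsIMap (Λ : AddSubgroup (Vd d)) (I : Set (Vd d) → Vd d → ℝ) : Prop :=
  (∀ P, IsRatPolyhedron Λ P → RatMeromorphicAt0 Λ (I P)) ∧
  (∀ P, IsRatPolyhedron Λ P → ContainsLine P → ∀ ξ, I P ξ = 0) ∧
  (∀ P, IsRatPolyhedron Λ P → ∀ m : Measure (Vd d),
    IsCanonicalMeasure Λ ((affineSpan ℝ P : AffineSubspace ℝ (Vd d)) : Set (Vd d)) m →
    ∀ ξ : Vd d, IntegrableOn (fun x => Real.exp (pairE (ξ) (x))) P m →
      I P ξ = ∫ x in P, Real.exp (pairE (ξ) (x)) ∂m)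

/-- the characterizing properties of the map `S`: it sends rational polyhedra to meromorphic
functions with rational coefficients, vanishes on polyhedra containing lines, and is given by
`∑_{x ∈ P ∩ Λ} e^{⟨ξ,x⟩}` wherever this sum converges absolutely. -/
def IsSMap (Λ : AddSubgroup (Vd d)) (S : Set (Vd d) → Vd d → ℝ) : Prop :=
  (∀ P, IsRatPolyhedron Λ P → RatMeromorphicAt0 Λ (S P)) ∧
  (∀ P, IsRatPolyhedron Λ P → ContainsLine P → ∀ ξ, S P ξ = 0) ∧
  (∀ P, IsRatPolyhedron Λ P → ∀ ξ : Vd d,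
    Summable (fun x : ↥(P ∩ (Λ : Set (Vd d))) => Real.exp (pairE ξ (x : Vd d))) →
      S P ξ = ∑' x : ↥(P ∩ (Λ : Set (Vd d))), Real.exp (pairE ξ (x : Vd d)))

/-- `F` is a (nonempty, exposed) face of the convex set `P`. -/
def IsFaceOf (P F : Set (Vd d)) : Prop :=
  F.Nonempty ∧ ∃ φ : Vd d, F = {x ∈ P | ∀ y ∈ P, (pairE (φ) (y)) ≤ (pairE (φ) (x))}

/-- `v` is a vertex of `P`. -/
def IsVertexOf (P : Set (Vd d)) (v : Vd d) : Prop := IsFaceOf P {v}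

/-- the cone of feasible directions of `P` along the face `F` (computed at a point of the
relative interior of `F`). -/
def feasibleCone (P F : Set (Vd d)) : Set (Vd d) :=
  {u | ∃ x ∈ intrinsicInterior ℝ F, ∃ ε : ℝ, 0 < ε ∧ ∀ t : ℝ, 0 < t → t ≤ ε → x + t • u ∈ P}

/-- the supporting cone `<F> + c(P,F)` of `P` along its face `F`. -/
def suppCone (P F : Set (Vd d)) : Set (Vd d) :=
  {z | ∃ a ∈ (affineSpan ℝ F : Set (Vd d)), ∃ u ∈ feasibleCone P F, z = a + u}

/-- the recession cone (cone of directions) of a convex set. -/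
def recCone (P : Set (Vd d)) : Set (Vd d) :=
  {u | ∀ x ∈ P, ∀ t : ℝ, 0 ≤ t → x + t • u ∈ P}

/-- a rational affine cone with respect to the lattice `Λ`: a rational translate of a cone
generated by finitely many lattice vectors. -/
def IsRatAffineCone (Λ : AddSubgroup (Vd d)) (a : Set (Vd d)) : Prop :=
  ∃ (s : Vd d) (n : ℕ) (v : Fin n → Vd d), IsRatPoint Λ s ∧ (∀ i, v i ∈ Λ) ∧
    a = {x | ∃ t : Fin n → ℝ, (∀ i, 0 ≤ t i) ∧ x = s + ∑ i, t i • v i}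

/-- a rational (convex polyhedral) cone with vertex at the origin. -/
def IsRatCone (Λ : AddSubgroup (Vd d)) (c : Set (Vd d)) : Prop :=
  ∃ (n : ℕ) (v : Fin n → Vd d), (∀ i, v i ∈ Λ) ∧
    c = {x | ∃ t : Fin n → ℝ, (∀ i, 0 ≤ t i) ∧ x = ∑ i, t i • v i}

/-- `Q` is a rational scalar product: a symmetric positive definite bilinear form taking
rational values on lattice vectors. -/
def IsRatInner (Λ : AddSubgroup (Vd d)) (Q : Vd d →ₗ[ℝ] Vd d →ₗ[ℝ] ℝ) : Prop :=
  (∀ x y, Q x y = Q y x) ∧ (∀ x : Vd d, x ≠ 0 → 0 < Q x x) ∧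
  (∀ x ∈ Λ, ∀ y ∈ Λ, ∃ q : ℚ, Q x y = (q : ℝ))

/-- `π` realizes the quotient map `V → V/L` as the `Q`-orthogonal projection onto the
`Q`-orthogonal complement of `L`. -/
def IsQCoproj (Q : Vd d →ₗ[ℝ] Vd d →ₗ[ℝ] ℝ) (L : Submodule ℝ (Vd d))
    (π : Vd d →ₗ[ℝ] Vd d) : Prop :=
  (∀ x, x - π x ∈ L) ∧ (∀ x : Vd d, ∀ y ∈ L, Q (π x) y = 0)

/-- `Λ'` is the lattice of a rational quotient space of `(V, Λ)`, realized inside `V` via the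
`Q`-orthogonal projection along a rational subspace. -/
def IsQuotLattice (Q : Vd d →ₗ[ℝ] Vd d →ₗ[ℝ] ℝ) (Λ Λ' : AddSubgroup (Vd d)) : Prop :=
  ∃ (L : Submodule ℝ (Vd d)) (π : Vd d →ₗ[ℝ] Vd d),
    Submodule.span ℝ ((L : Set (Vd d)) ∩ (Λ : Set (Vd d))) = L ∧
    IsQCoproj Q L π ∧ Λ' = AddSubgroup.map π.toAddMonoidHom Λ

/-- a family of maps `I` indexed by the rational quotient spaces of `(V,Λ)`, each member
satisfying the characterizing properties of the integral generating function. -/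
def IsIFamily (Q : Vd d →ₗ[ℝ] Vd d →ₗ[ℝ] ℝ) (Λ : AddSubgroup (Vd d))
    (I : AddSubgroup (Vd d) → Set (Vd d) → Vd d → ℝ) : Prop :=
  ∀ Λ', IsQuotLattice Q Λ Λ' → IsIMap Λ' (I Λ')

/-- a family of maps `S` indexed by the rational quotient spaces of `(V,Λ)`, each member
satisfying the characterizing properties of the lattice-point generating function. -/
def IsSFamily (Q : Vd d →ₗ[ℝ] Vd d →ₗ[ℝ] ℝ) (Λ : AddSubgroup (Vd d))
    (S : AddSubgroup (Vd d) → Set (Vd d) → Vd d → ℝ) : Prop :=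
  ∀ Λ', IsQuotLattice Q Λ Λ' → IsSMap Λ' (S Λ')

/-- the defining properties (a),(b),(c) of the family `μ` of Berline--Vergne:
each `μ(a)` is meromorphic with rational coefficients near `0`, `μ_{0}({0}) = 1`, and for
every pointed rational affine cone `a` in a rational quotient `W` of `V` one has
`S(a) = ∑_{f ∈ F(a)} μ(t(a,f)) I(f)`, where the transverse cone `t(a,f)` is realized inside
`V` by the `Q`-orthogonal projection `π F` along `lin(f)`, and functions on quotient duals
are extended by `Q`-orthogonal projection. -/
def IsMuCore (Λ : AddSubgroup (Vd d)) (Q : Vd d →ₗ[ℝ] Vd d →ₗ[ℝ] ℝ)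
    (I S μ : AddSubgroup (Vd d) → Set (Vd d) → Vd d → ℝ) : Prop :=
  (∀ Λ', IsQuotLattice Q Λ Λ' → ∀ a, IsRatAffineCone Λ' a → ¬ ContainsLine a →
      RatMeromorphicAt0 Λ' (μ Λ' a)) ∧
  (∀ ξ, μ ⊥ ({0} : Set (Vd d)) ξ = 1) ∧
  (∀ Λ', IsQuotLattice Q Λ Λ' → ∀ a, IsRatAffineCone Λ' a → ¬ ContainsLine a →
    ∀ π : Set (Vd d) → (Vd d →ₗ[ℝ] Vd d),
      (∀ F, IsFaceOf a F → IsQCoproj Q (affineSpan ℝ F).direction (π F)) →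
      MeroEqAt0 (S Λ' a)
        (fun ξ => ∑ᶠ F ∈ {F | IsFaceOf a F},
          μ (AddSubgroup.map (π F).toAddMonoidHom Λ') ((π F) '' suppCone a F) ξ
            * I Λ' F ξ))

/-- the family `μ`, extended by `μ(a) = 0` on cones containing a straight line. -/
def IsMuFamily (Λ : AddSubgroup (Vd d)) (Q : Vd d →ₗ[ℝ] Vd d →ₗ[ℝ] ℝ)
    (I S μ : AddSubgroup (Vd d) → Set (Vd d) → Vd d → ℝ) : Prop :=
  IsMuCore Λ Q I S μ ∧
  (∀ Λ', IsQuotLattice Q Λ Λ' → ∀ a, IsRatAffineCone Λ' a → ContainsLine a →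
    ∀ ξ, μ Λ' a ξ = 0)

/-- the trace pairing of two `n`-multilinear forms on `ℝ^d`, computed in the standard basis. -/
def multiPair {n : ℕ} (p q : ContinuousMultilinearMap ℝ (fun _ : Fin n => Vd d) ℝ) : ℝ :=
  ∑ ι : Fin n → Fin d,
    p (fun j => (EuclideanSpace.basisFun (Fin d) ℝ) (ι j)) *
    q (fun j => (EuclideanSpace.basisFun (Fin d) ℝ) (ι j))

/-- the action on `h` of the infinite-order constant-coefficient differential operator whose
symbol has Taylor series `p` at `0`; on polynomials `h` the sum is finite.  Its defining
property is `D(Φ)e^{⟨ξ,·⟩} = Φ(ξ)e^{⟨ξ,·⟩}`. -/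
def DOp (p : FormalMultilinearSeries ℝ (Vd d) ℝ) (h : Vd d → ℝ) (x : Vd d) : ℝ :=
  ∑ᶠ n : ℕ, multiPair (p n) (iteratedFDeriv ℝ n h x)

/-- `h` is a polynomial function on `ℝ^d`. -/
def IsPolyFun (h : Vd d → ℝ) : Prop :=
  ∃ p : MvPolynomial (Fin d) ℝ, ∀ x : Vd d, h x = MvPolynomial.eval (fun i => x i) p

/-- `h` is a polynomial function of degree at most `r` on `ℝ^d`. -/
def IsPolyFunOfDeg (h : Vd d → ℝ) (r : ℕ) : Prop :=
  ∃ p : MvPolynomial (Fin d) ℝ, p.totalDegree ≤ r ∧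
    ∀ x : Vd d, h x = MvPolynomial.eval (fun i => x i) p

end

/-!
Write `Φ(t, x) = ∑ₙ bₙ₊₁(t) / (n + 1)! · h⁽ⁿ⁾(x)` and `g(u) = Φ(0, u) + ∫₀ᵘ h`. Since
`b'ₙ₊₁ = (n + 1) bₙ` and `b₀ = 1`, the derivative of `t ↦ Φ(t, u - t)` telescopes to `h(u - t)`,
so `Φ(t, u - t) + ∫₀^{u-t} h = g(u)` for every `t`. At `t = 1`, where `bₙ₊₁(1) - bₙ₊₁(0)` is `1`
for `n = 0` and `0` otherwise, this gives `g(u + 1) = g(u) + h(u)`, so the lattice sum telescopes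
to `g(k₂ + 1) - g(k₁)`. Taking `(u, t) = (k₁, t₁)` and `(u, t) = (k₂ + 1, 1 - t₂)` expresses both
values through the corrections at `a₁` and `a₂`; the reflection `bₙ₊₁(1 - t) = (-1)ⁿ⁺¹ bₙ₊₁(t)`
puts the one at `a₂` in the alternating form of the statement.
-/

open Polynomial Finset

lemma aeval_ratCast_eq_eval {K : Type*} [Field K] [CharZero K] (q : ℚ) (p : ℚ[X]) :
    aeval (q : K) p = ((p.eval q : ℚ) : K) := by
  rw [← eq_ratCast (algebraMap ℚ K) q, aeval_algebraMap_apply, coe_aeval_eq_eval, eq_ratCast]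

lemma hasDerivAt_aeval_bernoulli_succ (n : ℕ) (t : ℝ) :
    HasDerivAt (fun t : ℝ => aeval t (Polynomial.bernoulli (n + 1)))
      ((n + 1) * aeval t (Polynomial.bernoulli n)) t := by
  simpa [derivative_bernoulli_add_one] using (Polynomial.bernoulli (n + 1)).hasDerivAt_aeval t

lemma sum_Ico_sub_int {M : Type*} [AddCommGroup M] (g : ℤ → M) {m n : ℤ} (hmn : m ≤ n) :
    ∑ k ∈ Ico m n, (g (k + 1) - g k) = g n - g m := by
  induction n, hmn using Int.leInduction with
  | base => simp
  | succ n hmn ih =>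
    rw [Finset.Ico_add_one_right_eq_Icc, ← Finset.Ico_insert_right hmn, sum_insert (by simp), ih]
    abel

lemma finsum_mul_eval_iterate_derivative (h : ℝ[X]) (c : ℕ → ℝ) (x : ℝ) :
    ∑ᶠ n, c n * (derivative^[n] h).eval x
      = ∑ n ∈ range (h.natDegree + 1), c n * (derivative^[n] h).eval x := by
  refine finsum_eq_sum_of_support_subset _ fun n hn => ?_
  by_contra hn'
  simp only [coe_range, Set.mem_Iio, not_lt] at hn'
  simp [iterate_derivative_eq_zero (Nat.lt_of_succ_le hn')] at hn

noncomputable def bernoulliCorrection (h : ℝ[X]) (t x : ℝ) : ℝ :=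
  ∑ n ∈ range (h.natDegree + 1),
    aeval t (Polynomial.bernoulli (n + 1)) / (n + 1).factorial * (derivative^[n] h).eval x

noncomputable def discretePrimitive (h : ℝ[X]) (x : ℝ) : ℝ :=
  bernoulliCorrection h 0 x + ∫ s in (0 : ℝ)..x, h.eval s

lemma hasDerivAt_bernoulliCorrection_sub (h : ℝ[X]) (u t : ℝ) :
    HasDerivAt (fun t => bernoulliCorrection h t (u - t)) (h.eval (u - t)) t := by
  set G : ℕ → ℝ := fun n =>
    aeval t (Polynomial.bernoulli n) / n.factorial * (derivative^[n] h).eval (u - t)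
  have hterm : ∀ n ∈ range (h.natDegree + 1),
      HasDerivAt (fun t => aeval t (Polynomial.bernoulli (n + 1)) / (n + 1).factorial
        * (derivative^[n] h).eval (u - t)) (G n - G (n + 1)) t := by
    intro n _
    have hD : HasDerivAt (fun t : ℝ => (derivative^[n] h).eval (u - t))
        (-(derivative^[n + 1] h).eval (u - t)) t := by
      simpa [Function.iterate_succ_apply', Function.comp_def] using
        ((derivative^[n] h).hasDerivAt (u - t)).comp t ((hasDerivAt_id t).const_sub u)
    refine (((hasDerivAt_aeval_bernoulli_succ n t).div_const ((n + 1).factorial : ℝ)).mul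
      hD).congr_deriv ?_
    simp only [G, Nat.factorial_succ, Nat.cast_mul, Function.iterate_succ_apply']
    field_simp
    push_cast
    ring
  have hsum := HasDerivAt.fun_sum hterm
  rw [sum_range_sub'] at hsum
  refine hsum.congr_deriv ?_
  simp [G, iterate_derivative_eq_zero (Nat.lt_succ_self h.natDegree)]

lemma bernoulliCorrection_sub_add_integral (h : ℝ[X]) (u t : ℝ) :
    bernoulliCorrection h t (u - t) + ∫ s in (0 : ℝ)..(u - t), h.eval s
      = discretePrimitive h u := by
  have hderiv : ∀ t, HasDerivAt
      (fun t => bernoulliCorrection h t (u - t) + ∫ s in (0 : ℝ)..(u - t), h.eval s) 0 t := by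
    intro t
    have hI := (h.continuous.integral_hasStrictDerivAt 0 (u - t)).hasDerivAt.comp t
      ((hasDerivAt_id t).const_sub u)
    simpa [Function.comp_def] using (hasDerivAt_bernoulliCorrection_sub h u t).fun_add hI
  simpa [discretePrimitive] using is_const_of_deriv_eq_zero
    (fun t => (hderiv t).differentiableAt) (fun t => (hderiv t).deriv) t 0

lemma bernoulliCorrection_one (h : ℝ[X]) (x : ℝ) :
    bernoulliCorrection h 1 x = bernoulliCorrection h 0 x + h.eval x := by
  have hB : ∀ n : ℕ, aeval (1 : ℝ) (Polynomial.bernoulli (n + 1))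
      = aeval (0 : ℝ) (Polynomial.bernoulli (n + 1)) + if n = 0 then 1 else 0 := by
    intro n
    have hshift := bernoulli_eval_one_add (n + 1) 0
    rw [add_zero] at hshift
    rw [← Rat.cast_one, ← Rat.cast_zero, aeval_ratCast_eq_eval, aeval_ratCast_eq_eval, hshift]
    split_ifs with hn <;> simp [hn]
  simp only [bernoulliCorrection]
  rw [sum_congr rfl fun n _ => by rw [hB n]]
  simp [add_div, add_mul, sum_add_distrib, ite_div, ite_mul]

lemma discretePrimitive_add_one (h : ℝ[X]) (x : ℝ) :
    discretePrimitive h (x + 1) = discretePrimitive h x + h.eval x := by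
  rw [← bernoulliCorrection_sub_add_integral h (x + 1) 1, add_sub_cancel_right,
    bernoulliCorrection_one, discretePrimitive]
  ring

lemma sum_Ico_eval_eq_discretePrimitive_sub (h : ℝ[X]) {m n : ℤ} (hmn : m ≤ n) :
    ∑ k ∈ Ico m n, h.eval (k : ℝ) = discretePrimitive h n - discretePrimitive h m := by
  rw [← sum_Ico_sub_int (fun k : ℤ => discretePrimitive h k) hmn]
  refine sum_congr rfl fun k _ => ?_
  rw [Int.cast_add, Int.cast_one, discretePrimitive_add_one]
  ring

lemma finsum_bernoulli_eq_bernoulliCorrection (h : ℝ[X]) (q : ℚ) (x : ℝ) :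
    ∑ᶠ n : ℕ, ((eval q (Polynomial.bernoulli (n + 1)) / ((n + 1).factorial : ℚ) : ℚ) : ℝ)
        * (derivative^[n] h).eval x = bernoulliCorrection h q x := by
  rw [finsum_mul_eval_iterate_derivative, bernoulliCorrection]
  refine sum_congr rfl fun n _ => ?_
  push_cast
  rw [aeval_ratCast_eq_eval]

lemma finsum_neg_one_pow_bernoulli_eq_bernoulliCorrection (h : ℝ[X]) (q : ℚ) (x : ℝ) :
    ∑ᶠ n : ℕ, (-1 : ℝ) ^ n
        * ((eval q (Polynomial.bernoulli (n + 1)) / ((n + 1).factorial : ℚ) : ℚ) : ℝ)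
        * (derivative^[n] h).eval x = -bernoulliCorrection h (1 - q : ℚ) x := by
  rw [finsum_mul_eval_iterate_derivative, bernoulliCorrection, ← sum_neg_distrib]
  refine sum_congr rfl fun n _ => ?_
  rw [aeval_ratCast_eq_eval, bernoulli_eval_one_sub]
  push_cast
  ring

/-- Euler–Maclaurin in dimension one with rational endpoints: for rational
`a₁ ≤ a₂` and a polynomial `h`,
`∑_{x ∈ ℤ, a₁ ≤ x ≤ a₂} h(x) = ∫_{a₁}^{a₂} h − ∑_{n≥0} b(n+1,t₁)/(n+1)! · h⁽ⁿ⁾(a₁)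
− ∑_{n≥0} (−1)ⁿ b(n+1,t₂)/(n+1)! · h⁽ⁿ⁾(a₂)`, with `t₁ = ⌈a₁⌉ − a₁`, `t₂ = a₂ − ⌊a₂⌋`,
and `b(n,t)` the Bernoulli polynomials; the sums are finite since `h` is a polynomial. -/
theorem statement16 (a₁ a₂ : ℚ) (hle : a₁ ≤ a₂) (h : Polynomial ℝ) :
    ∑ x ∈ Finset.Icc ⌈a₁⌉ ⌊a₂⌋, Polynomial.eval (x : ℝ) h
      = (∫ t in (a₁ : ℝ)..(a₂ : ℝ), Polynomial.eval t h)
        - ∑ᶠ n : ℕ,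
            ((Polynomial.eval ((⌈a₁⌉ : ℚ) - a₁) (Polynomial.bernoulli (n + 1)) /
              (Nat.factorial (n + 1) : ℚ) : ℚ) : ℝ) *
            Polynomial.eval (a₁ : ℝ) ((fun p => Polynomial.derivative p)^[n] h)
        - ∑ᶠ n : ℕ, (-1 : ℝ) ^ n *
            ((Polynomial.eval (a₂ - (⌊a₂⌋ : ℚ)) (Polynomial.bernoulli (n + 1)) /
              (Nat.factorial (n + 1) : ℚ) : ℚ) : ℝ) *
            Polynomial.eval (a₂ : ℝ) ((fun p => Polynomial.derivative p)^[n] h) := by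
  have hceil : ⌈a₁⌉ ≤ ⌊a₂⌋ + 1 := (Int.ceil_mono hle).trans (Int.ceil_le_floor_add_one a₂)
  have hlower := bernoulliCorrection_sub_add_integral h ⌈a₁⌉ (⌈a₁⌉ - a₁)
  have hupper := bernoulliCorrection_sub_add_integral h (⌊a₂⌋ + 1) (1 - (a₂ - ⌊a₂⌋))
  rw [sub_sub_cancel] at hlower
  rw [show (⌊a₂⌋ + 1 : ℝ) - (1 - (a₂ - ⌊a₂⌋)) = a₂ by ring] at hupper
  rw [← Finset.Ico_add_one_right_eq_Icc, sum_Ico_eval_eq_discretePrimitive_sub h hceil,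
    finsum_bernoulli_eq_bernoulliCorrection, finsum_neg_one_pow_bernoulli_eq_bernoulliCorrection,
    ← intervalIntegral.integral_interval_sub_left (a := 0) (h.continuous.intervalIntegrable _ _)
      (h.continuous.intervalIntegrable _ _)]
  push_cast
  linarith
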